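/- arXiv:1202.2598 — 3 statements merged into one kernel-verified Lean document; each statement's English description precedes it below -/
import Mathlib

section
/- Let γ be Euclidean gamma matrices with charge-conjugation matrix C, and let ξ : Fin 4 → R be a Grassmann-even Majorana spinor over a ℂ-algebra R. Then for all μ, ν, ρ, σ: ξ̄(γ_μγ_νγ_ργ_σ)ξ = δ_{μν}·ξ̄σ_{ρσ}ξ - δ_{μρ}·ξ̄σ_{νσ}ξ + δ_{μσ}·ξ̄σ_{νρ}ξ + δ_{νρ}·ξ̄σ_{μσ}ξ - δ_{νσ}·ξ̄σ_{μρ}ξ + δ_{ρσ}·ξ̄σ_{μν}ξ. -/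
open Matrix Complex BigOperators

noncomputable section

abbrev M4 : Type := Matrix (Fin 4) (Fin 4) ℂ

/-- Euclidean Clifford relation: γ_μγ_ν + γ_νγ_μ = 2δ_{μν}·1. -/
def CliffordRel (γ : Fin 4 → M4) : Prop :=
  ∀ μ ν, γ μ * γ ν + γ ν * γ μ = if μ = ν then (2 : ℂ) • (1 : M4) else 0

/-- γ5 := -(γ_0 γ_1 γ_2 γ_3). -/
def gamma5 (γ : Fin 4 → M4) : M4 := -(γ 0 * γ 1 * γ 2 * γ 3)

/-- σ_{μν} := (γ_μγ_ν - γ_νγ_μ)/2 = [γ_μ, γ_ν]/2. -/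
def sigmaMat (γ : Fin 4 → M4) (μ ν : Fin 4) : M4 :=
  (2⁻¹ : ℂ) • (γ μ * γ ν - γ ν * γ μ)

/-- Charge-conjugation matrix: invertible, Cᵀ = -C, C⁻¹γ_μC = -(γ_μ)ᵀ. -/
def ChargeConj (γ : Fin 4 → M4) (C : M4) : Prop :=
  IsUnit C.det ∧ Cᵀ = -C ∧ ∀ μ, C⁻¹ * γ μ * C = -(γ μ)ᵀ

/-- Majorana conjugate row vector: ξ̄_β := -Σ_α ξ_α·(C⁻¹)_{αβ}. -/
def MajBar {R : Type*} [Ring R] [Algebra ℂ R] (C : M4) (ξ : Fin 4 → R) (β : Fin 4) : R :=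
  -∑ α, (C⁻¹ α β) • ξ α

/-- Spinor bilinear: ξ̄Mχ := Σ_{β,γ'} ξ̄_β·M_{βγ'}·χ_{γ'} (complex entries act by scalar
multiplication). -/
def bilin {R : Type*} [Ring R] [Algebra ℂ R] (C : M4) (M : M4) (ξ χ : Fin 4 → R) : R :=
  ∑ β, ∑ g, M β g • (MajBar C ξ β * χ g)

/-! ### Auxiliary machinery -/

/-- A general Clifford-algebra identity for four anticommuting-type elements. -/
lemma key_clifford {A : Type*} [Ring A] [Algebra ℂ A] (a b c d : A)
    (pab pac pad pbc pbd pcd : ℂ)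
    (hab : b*a = pab•(1:A) - a*b) (hac : c*a = pac•(1:A) - a*c)
    (had : d*a = pad•(1:A) - a*d) (hbc : c*b = pbc•(1:A) - b*c)
    (hbd : d*b = pbd•(1:A) - b*d) (hcd : d*c = pcd•(1:A) - c*d) :
    a*b*c*d - d*c*b*a =
      pab•(c*d) - pac•(b*d) + pad•(b*c) + pbc•(a*d) - pbd•(a*c) + pcd•(a*b)
        - (pab*pcd - pac*pbd + pad*pbc)•(1:A) := by
  have hab' : ∀ x : A, b*(a*x) = pab•x - a*(b*x) := by
    intro x; rw [← mul_assoc, hab, sub_mul, smul_mul_assoc, one_mul, mul_assoc]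
  have hac' : ∀ x : A, c*(a*x) = pac•x - a*(c*x) := by
    intro x; rw [← mul_assoc, hac, sub_mul, smul_mul_assoc, one_mul, mul_assoc]
  have had' : ∀ x : A, d*(a*x) = pad•x - a*(d*x) := by
    intro x; rw [← mul_assoc, had, sub_mul, smul_mul_assoc, one_mul, mul_assoc]
  have hbc' : ∀ x : A, c*(b*x) = pbc•x - b*(c*x) := by
    intro x; rw [← mul_assoc, hbc, sub_mul, smul_mul_assoc, one_mul, mul_assoc]
  have hbd' : ∀ x : A, d*(b*x) = pbd•x - b*(d*x) := by
    intro x; rw [← mul_assoc, hbd, sub_mul, smul_mul_assoc, one_mul, mul_assoc]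
  have hcd' : ∀ x : A, d*(c*x) = pcd•x - c*(d*x) := by
    intro x; rw [← mul_assoc, hcd, sub_mul, smul_mul_assoc, one_mul, mul_assoc]
  simp only [mul_assoc, mul_sub, sub_mul, mul_smul_comm, smul_mul_assoc, mul_one, one_mul,
    hab, hac, had, hbc, hbd, hcd, hab', hac', had', hbc', hbd', hcd', smul_sub, smul_smul]
  module

/-- Quadratic form in the spinor components. -/
def qform {R : Type*} [Ring R] [Algebra ℂ R] (ξ : Fin 4 → R) (N : M4) : R :=
  ∑ α, ∑ g, N α g • (ξ α * ξ g)

lemma qform_add {R : Type*} [Ring R] [Algebra ℂ R] (ξ : Fin 4 → R) (N N' : M4) :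
    qform ξ (N + N') = qform ξ N + qform ξ N' := by
  simp [qform, add_smul, Finset.sum_add_distrib]

lemma qform_smul {R : Type*} [Ring R] [Algebra ℂ R] (ξ : Fin 4 → R) (c : ℂ) (N : M4) :
    qform ξ (c • N) = c • qform ξ N := by
  simp [qform, smul_smul, Finset.smul_sum]

lemma qform_transpose {R : Type*} [Ring R] [Algebra ℂ R] (ξ : Fin 4 → R)
    (heven : ∀ α β, ξ α * ξ β = ξ β * ξ α) (N : M4) :
    qform ξ Nᵀ = qform ξ N := by
  unfold qform
  rw [Finset.sum_comm]
  refine Finset.sum_congr rfl fun x _ => Finset.sum_congr rfl fun y _ => ?_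
  rw [transpose_apply, heven]

lemma bilin_eq_qform {R : Type*} [Ring R] [Algebra ℂ R] (C : M4) (M : M4) (ξ : Fin 4 → R) :
    bilin C M ξ ξ = -qform ξ (C⁻¹ * M) := by
  unfold bilin MajBar qform
  simp only [Matrix.mul_apply, neg_mul, Finset.sum_mul, smul_mul_assoc, smul_neg,
    smul_smul, Finset.smul_sum, Finset.sum_smul, Finset.sum_neg_distrib, neg_neg]
  refine congrArg Neg.neg ?_
  rw [Finset.sum_comm]
  refine Eq.trans (Finset.sum_congr rfl fun g _ => Finset.sum_comm) ?_
  rw [Finset.sum_comm]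
  exact Finset.sum_congr rfl fun α _ => Finset.sum_congr rfl fun g _ =>
    Finset.sum_congr rfl fun β _ => by rw [mul_comm]

lemma bilin_smul {R : Type*} [Ring R] [Algebra ℂ R] (C : M4) (c : ℂ) (M : M4) (ξ : Fin 4 → R) :
    bilin C (c • M) ξ ξ = c • bilin C M ξ ξ := by
  simp [bilin_eq_qform, qform_smul, Matrix.mul_smul]

lemma bilin_add {R : Type*} [Ring R] [Algebra ℂ R] (C : M4) (M M' : M4) (ξ : Fin 4 → R) :
    bilin C (M + M') ξ ξ = bilin C M ξ ξ + bilin C M' ξ ξ := by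
  simp [bilin_eq_qform, qform_add, Matrix.mul_add, neg_add, add_comm]

lemma bilin_sub {R : Type*} [Ring R] [Algebra ℂ R] (C : M4) (M M' : M4) (ξ : Fin 4 → R) :
    bilin C (M - M') ξ ξ = bilin C M ξ ξ - bilin C M' ξ ξ := by
  have : M - M' = M + (-1 : ℂ) • M' := by module
  rw [this, bilin_add, bilin_smul]; module

lemma half_two_if {R : Type*} [Ring R] [Algebra ℂ R] (P : Prop) [Decidable P] (x : R) :
    (2⁻¹ : ℂ) • ((if P then (2:ℂ) else 0) • x) = if P then x else 0 := by
  split_ifs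
  · rw [smul_smul]; norm_num
  · simp

theorem statement4 {R : Type*} [Ring R] [Algebra ℂ R]
    (γ : Fin 4 → M4) (C : M4) (hcl : CliffordRel γ) (hC : ChargeConj γ C)
    (ξ : Fin 4 → R) (heven : ∀ α β, ξ α * ξ β = ξ β * ξ α) :
    ∀ μ ν ρ σ, bilin C (γ μ * γ ν * γ ρ * γ σ) ξ ξ =
      (if μ = ν then bilin C (sigmaMat γ ρ σ) ξ ξ else 0)
      - (if μ = ρ then bilin C (sigmaMat γ ν σ) ξ ξ else 0)
      + (if μ = σ then bilin C (sigmaMat γ ν ρ) ξ ξ else 0)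
      + (if ν = ρ then bilin C (sigmaMat γ μ σ) ξ ξ else 0)
      - (if ν = σ then bilin C (sigmaMat γ μ ρ) ξ ξ else 0)
      + (if ρ = σ then bilin C (sigmaMat γ μ ν) ξ ξ else 0) := by
  obtain ⟨hdet, hCt, hg⟩ := hC
  intro μ ν ρ σ
  -- basic facts about C
  have hCC1 : C * C⁻¹ = 1 := Matrix.mul_nonsing_inv C hdet
  have hC'C1 : C⁻¹ * C = 1 := Matrix.nonsing_inv_mul C hdet
  have hCC : ∀ X : M4, C * (C⁻¹ * X) = X := fun X => by rw [← mul_assoc, hCC1, one_mul]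
  have hC'C : ∀ X : M4, C⁻¹ * (C * X) = X := fun X => by rw [← mul_assoc, hC'C1, one_mul]
  have hCinvT : (C⁻¹)ᵀ = -C⁻¹ := by
    rw [Matrix.transpose_nonsing_inv, hCt]
    refine Matrix.inv_eq_right_inv ?_
    rw [neg_mul_neg, hCC1]
  have hgT : ∀ x, (γ x)ᵀ = -(C⁻¹ * (γ x * C)) := by
    intro x
    have := hg x
    rw [mul_assoc] at this
    rw [this, neg_neg]
  -- the bracket scalars
  set e : Fin 4 → Fin 4 → ℂ := fun x y => if x = y then (2:ℂ) else 0 with he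
  have hswap : ∀ x y, γ y * γ x = (e x y) • (1 : M4) - γ x * γ y := by
    intro x y
    have h := hcl x y
    have h2 : (if x = y then (2:ℂ) • (1:M4) else 0) = e x y • 1 := by
      simp only [he]; split_ifs <;> simp
    rw [h2] at h
    linear_combination (norm := module) h
  -- the matrix S (twice the σ combination)
  set S : M4 := e μ ν • sigmaMat γ ρ σ - e μ ρ • sigmaMat γ ν σ + e μ σ • sigmaMat γ ν ρ
      + e ν ρ • sigmaMat γ μ σ - e ν σ • sigmaMat γ μ ρ + e ρ σ • sigmaMat γ μ ν with hS
  -- the Clifford identity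
  have hmat : γ μ * γ ν * γ ρ * γ σ - γ σ * γ ρ * γ ν * γ μ = S := by
    rw [key_clifford (γ μ) (γ ν) (γ ρ) (γ σ) (e μ ν) (e μ ρ) (e μ σ) (e ν ρ) (e ν σ) (e ρ σ)
      (hswap μ ν) (hswap μ ρ) (hswap μ σ) (hswap ν ρ) (hswap ν σ) (hswap ρ σ), hS]
    unfold sigmaMat
    rw [hswap ρ σ, hswap ν σ, hswap ν ρ, hswap μ σ, hswap μ ρ, hswap μ ν]
    module
  -- transpose behaviour of the four-γ product
  have htp4 : (C⁻¹ * (γ μ * γ ν * γ ρ * γ σ))ᵀ = -(C⁻¹ * (γ σ * γ ρ * γ ν * γ μ)) := by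
    simp [Matrix.transpose_mul, hgT, hCinvT, mul_assoc, hCC, hC'C, hCC1, hC'C1, mul_one, neg_mul, mul_neg]
  -- transpose behaviour of σ bilinear combos
  have htp2 : ∀ x y, (C⁻¹ * (γ x * γ y))ᵀ = -(C⁻¹ * (γ y * γ x)) := by
    intro x y
    simp [Matrix.transpose_mul, hgT, hCinvT, mul_assoc, hCC, hC'C, hCC1, hC'C1, mul_one, neg_mul, mul_neg]
  have hst : (C⁻¹ * S)ᵀ = C⁻¹ * S := by
    have hsig : ∀ x y, (C⁻¹ * sigmaMat γ x y)ᵀ = C⁻¹ * sigmaMat γ x y := by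
      intro x y
      unfold sigmaMat
      rw [Matrix.mul_smul, Matrix.transpose_smul, Matrix.mul_sub, Matrix.transpose_sub,
        htp2 x y, htp2 y x]
      module
    rw [hS]
    simp only [Matrix.mul_add, Matrix.mul_sub, Matrix.mul_smul, Matrix.transpose_add,
      Matrix.transpose_sub, Matrix.transpose_smul, hsig]
  -- the key equality of quadratic forms
  have hq : qform ξ (C⁻¹ * (γ μ * γ ν * γ ρ * γ σ)) = qform ξ (C⁻¹ * ((2⁻¹:ℂ) • S)) := by
    have h2 : (2:ℂ) • qform ξ (C⁻¹ * (γ μ * γ ν * γ ρ * γ σ))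
        = (2:ℂ) • qform ξ (C⁻¹ * ((2⁻¹:ℂ) • S)) := by
      have e1 : (2:ℂ) • qform ξ (C⁻¹ * (γ μ * γ ν * γ ρ * γ σ))
          = qform ξ (C⁻¹ * (γ μ * γ ν * γ ρ * γ σ) + (C⁻¹ * (γ μ * γ ν * γ ρ * γ σ))ᵀ) := by
        rw [qform_add, qform_transpose ξ heven, two_smul]
      rw [htp4] at e1
      have e2 : C⁻¹ * (γ μ * γ ν * γ ρ * γ σ) + -(C⁻¹ * (γ σ * γ ρ * γ ν * γ μ))
          = C⁻¹ * S := by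
        rw [← hmat, Matrix.mul_sub]; module
      rw [e2] at e1
      have e3 : (2:ℂ) • qform ξ (C⁻¹ * ((2⁻¹:ℂ) • S)) = qform ξ (C⁻¹ * S) := by
        rw [Matrix.mul_smul, qform_smul, smul_smul]
        norm_num
      rw [e1, e3]
    have := congrArg (fun x => (2⁻¹:ℂ) • x) h2
    simpa [smul_smul] using this
  -- assemble
  rw [bilin_eq_qform, hq, ← bilin_eq_qform]
  rw [hS]
  simp only [smul_sub, smul_add]
  rw [show (2⁻¹:ℂ) • (e μ ν • sigmaMat γ ρ σ) - (2⁻¹:ℂ) • (e μ ρ • sigmaMat γ ν σ)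
      + (2⁻¹:ℂ) • (e μ σ • sigmaMat γ ν ρ) + (2⁻¹:ℂ) • (e ν ρ • sigmaMat γ μ σ)
      - (2⁻¹:ℂ) • (e ν σ • sigmaMat γ μ ρ) + (2⁻¹:ℂ) • (e ρ σ • sigmaMat γ μ ν)
      = ((2⁻¹:ℂ) • (e μ ν • sigmaMat γ ρ σ) - (2⁻¹:ℂ) • (e μ ρ • sigmaMat γ ν σ))
      + ((2⁻¹:ℂ) • (e μ σ • sigmaMat γ ν ρ) + (2⁻¹:ℂ) • (e ν ρ • sigmaMat γ μ σ))
      + ((2⁻¹:ℂ) • (e ρ σ • sigmaMat γ μ ν) - (2⁻¹:ℂ) • (e ν σ • sigmaMat γ μ ρ)) from by abel]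
  rw [bilin_add, bilin_add, bilin_sub, bilin_add, bilin_sub]
  simp only [bilin_smul, he]
  simp only [half_two_if]
  abel

end
end

section
/- Let γ be Euclidean gamma matrices with charge-conjugation matrix C, let ι be a finite index set, and let ψ^a : Fin 4 → R (a ∈ ι) be Grassmann-odd Majorana spinors over a ℂ-algebra R. Then for every symmetric family S : ι → ι → ℂ (S a b = S b a): Σ_{a,b} S a b·ψ̄^aγ_μψ^b = 0, Σ_{a,b} S a b·ψ̄^aσ_{μν}ψ^b = 0, and Σ_{a,b} S a b·ψ̄^a(γ5σ_{μν})ψ^b = 0 for all μ, ν; and for every antisymmetric family A : ι → ι → ℂ (A a b = -A b a): Σ_{a,b} A a b·ψ̄^aψ^b = 0, Σ_{a,b} A a b·ψ̄^aγ5ψ^b = 0, and Σ_{a,b} A a b·ψ̄^a(γ5γ_μ)ψ^b = 0 for all μ. -/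
open Matrix Complex BigOperators

noncomputable section

/-! ### Auxiliary lemmas -/

lemma eq_neg_self_zero' {R : Type*} [Ring R] [Algebra ℂ R] (x : R) (h : x = -x) : x = 0 := by
  have h2 : (2 : ℂ) • x = 0 := by
    rw [two_smul]; nth_rewrite 1 [h]; exact neg_add_cancel x
  have : ((2⁻¹ : ℂ) * 2) • x = 0 := by rw [← smul_smul, h2, smul_zero]
  simpa using this

lemma sum_skew' {R : Type*} [Ring R] [Algebra ℂ R] {ι : Type*} [Fintype ι] (f : ι → ι → R)
    (h : ∀ a b, f a b = -(f b a)) : ∑ a, ∑ b, f a b = 0 := by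
  apply eq_neg_self_zero'
  conv_lhs => rw [show (fun a => ∑ b, f a b) = (fun a => ∑ b, -(f b a)) from by
    funext a; exact Finset.sum_congr rfl fun b _ => h a b]
  rw [Finset.sum_comm]
  simp [Finset.sum_neg_distrib]

lemma sum3' {A : Type*} [AddCommMonoid A] (f : Fin 4 → Fin 4 → Fin 4 → A) :
    ∑ a, ∑ b, ∑ c, f a b c = ∑ c, ∑ b, ∑ a, f a b c := by
  rw [Finset.sum_comm]
  refine Eq.trans (Finset.sum_congr rfl fun b _ => Finset.sum_comm) ?_
  rw [Finset.sum_comm]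

lemma bilin_eq' {R : Type*} [Ring R] [Algebra ℂ R] (C M : M4) (ξ χ : Fin 4 → R) :
    bilin C M ξ χ = -∑ α, ∑ g, ((C⁻¹ * M) α g) • (ξ α * χ g) := by
  unfold bilin MajBar
  simp only [Matrix.mul_apply, Finset.sum_smul, neg_mul, smul_neg, Finset.sum_neg_distrib,
    Finset.sum_mul, smul_mul_assoc, Finset.smul_sum, smul_smul]
  congr 1
  rw [sum3']
  apply Finset.sum_congr rfl; intro α _
  apply Finset.sum_congr rfl; intro g _
  apply Finset.sum_congr rfl; intro β _
  rw [mul_comm]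

lemma bilin_swap' {R : Type*} [Ring R] [Algebra ℂ R] (C M : M4) (ε : ℂ)
    (hM : (C⁻¹ * M)ᵀ = ε • (C⁻¹ * M)) (ξ χ : Fin 4 → R)
    (hodd : ∀ α β, ξ α * χ β = -(χ β * ξ α)) :
    bilin C M χ ξ = -(ε • bilin C M ξ χ) := by
  rw [bilin_eq', bilin_eq']
  have key : ∀ α g, ((C⁻¹ * M) α g) = ε * ((C⁻¹ * M) g α) := by
    intro α g
    have := congrFun (congrFun hM g) α
    simpa [Matrix.transpose_apply, Matrix.smul_apply] using this
  rw [smul_neg, neg_neg]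
  calc -∑ α, ∑ g, ((C⁻¹ * M) α g) • (χ α * ξ g)
      = ∑ α, ∑ g, ((C⁻¹ * M) α g) • (ξ g * χ α) := by
        rw [← Finset.sum_neg_distrib]
        apply Finset.sum_congr rfl; intro α _
        rw [← Finset.sum_neg_distrib]
        apply Finset.sum_congr rfl; intro g _
        rw [← smul_neg, ← hodd]
    _ = ∑ α, ∑ g, ((C⁻¹ * M) g α) • (ξ α * χ g) := Finset.sum_comm
    _ = ∑ α, ∑ g, (ε * ((C⁻¹ * M) α g)) • (ξ α * χ g) := by
        apply Finset.sum_congr rfl; intro α _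
        apply Finset.sum_congr rfl; intro g _
        rw [← key]
    _ = ε • ∑ α, ∑ g, ((C⁻¹ * M) α g) • (ξ α * χ g) := by
        simp only [Finset.smul_sum, smul_smul]

/-! ### Gamma-matrix algebra -/

section MatId

variable (γ : Fin 4 → M4) (C : M4) (hcl : CliffordRel γ) (hC : ChargeConj γ C)

include hcl in
lemma gsq (μ : Fin 4) : γ μ * γ μ = 1 := by
  have h := hcl μ μ
  rw [if_pos rfl] at h
  have : (2:ℂ) • (γ μ * γ μ) = (2:ℂ) • (1 : M4) := by
    rw [two_smul, h]
  exact smul_right_injective M4 (by norm_num) this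

include hcl in
lemma gac {μ ν : Fin 4} (h : μ ≠ ν) : γ μ * γ ν = -(γ ν * γ μ) := by
  have h2 := hcl μ ν
  rw [if_neg h] at h2
  linear_combination (norm := abel) h2

include hcl in
lemma gswap {μ ν : Fin 4} (h : μ ≠ ν) (x : M4) :
    γ μ * (γ ν * x) = -(γ ν * (γ μ * x)) := by
  rw [← mul_assoc, gac γ hcl h, neg_mul, mul_assoc]

include hcl in
lemma gsq' (μ : Fin 4) (x : M4) : γ μ * (γ μ * x) = x := by
  rw [← mul_assoc, gsq γ hcl, one_mul]

include hcl in
lemma g5ac (μ : Fin 4) : γ μ * gamma5 γ = -(gamma5 γ * γ μ) := by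
  have s10 := gswap γ hcl (show (1:Fin 4) ≠ 0 by decide)
  have s20 := gswap γ hcl (show (2:Fin 4) ≠ 0 by decide)
  have s21 := gswap γ hcl (show (2:Fin 4) ≠ 1 by decide)
  have s30 := gswap γ hcl (show (3:Fin 4) ≠ 0 by decide)
  have s31 := gswap γ hcl (show (3:Fin 4) ≠ 1 by decide)
  have s32 := gswap γ hcl (show (3:Fin 4) ≠ 2 by decide)
  have a10 := gac γ hcl (show (1:Fin 4) ≠ 0 by decide)
  have a20 := gac γ hcl (show (2:Fin 4) ≠ 0 by decide)
  have a21 := gac γ hcl (show (2:Fin 4) ≠ 1 by decide)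
  have a30 := gac γ hcl (show (3:Fin 4) ≠ 0 by decide)
  have a31 := gac γ hcl (show (3:Fin 4) ≠ 1 by decide)
  have a32 := gac γ hcl (show (3:Fin 4) ≠ 2 by decide)
  have sq := gsq γ hcl
  have sq' := gsq' γ hcl
  have h4 : μ = 0 ∨ μ = 1 ∨ μ = 2 ∨ μ = 3 := by omega
  rcases h4 with h|h|h|h <;> subst h <;>
    simp only [gamma5, Fin.isValue, mul_assoc, mul_neg, neg_mul, neg_neg, neg_inj,
      s10, s20, s21, s30, s31, s32, a10, a20, a21, a30, a31, a32, sq, sq',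
      one_mul, mul_one]

include hcl in
lemma g5swap (μ : Fin 4) (x : M4) : γ μ * (gamma5 γ * x) = -(gamma5 γ * (γ μ * x)) := by
  rw [← mul_assoc, g5ac γ hcl, neg_mul, mul_assoc]

include hcl in
lemma grev : γ 3 * γ 2 * γ 1 * γ 0 = γ 0 * γ 1 * γ 2 * γ 3 := by
  have s10 := gswap γ hcl (show (1:Fin 4) ≠ 0 by decide)
  have s20 := gswap γ hcl (show (2:Fin 4) ≠ 0 by decide)
  have s21 := gswap γ hcl (show (2:Fin 4) ≠ 1 by decide)
  have s30 := gswap γ hcl (show (3:Fin 4) ≠ 0 by decide)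
  have s31 := gswap γ hcl (show (3:Fin 4) ≠ 1 by decide)
  have s32 := gswap γ hcl (show (3:Fin 4) ≠ 2 by decide)
  have a10 := gac γ hcl (show (1:Fin 4) ≠ 0 by decide)
  have a20 := gac γ hcl (show (2:Fin 4) ≠ 0 by decide)
  have a21 := gac γ hcl (show (2:Fin 4) ≠ 1 by decide)
  have a30 := gac γ hcl (show (3:Fin 4) ≠ 0 by decide)
  have a31 := gac γ hcl (show (3:Fin 4) ≠ 1 by decide)
  have a32 := gac γ hcl (show (3:Fin 4) ≠ 2 by decide)
  simp only [mul_assoc, mul_neg, neg_mul, neg_neg,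
    s10, s20, s21, s30, s31, s32, a10, a20, a21, a30, a31, a32]

include hcl in
lemma sg5 (μ ν : Fin 4) : sigmaMat γ μ ν * gamma5 γ = gamma5 γ * sigmaMat γ μ ν := by
  simp only [sigmaMat, smul_mul_assoc, mul_smul_comm, sub_mul, mul_sub, mul_assoc,
    g5ac γ hcl, g5swap γ hcl, mul_neg, neg_neg]

include hC in
lemma hCC' : C * C⁻¹ = 1 := Matrix.mul_nonsing_inv C hC.1

include hC in
lemma hmid (x : M4) : C * (C⁻¹ * x) = x := by rw [← mul_assoc, hCC' γ C hC, one_mul]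

include hC in
lemma hCiT : (C⁻¹)ᵀ = -C⁻¹ := by
  rw [Matrix.transpose_nonsing_inv, hC.2.1]
  refine Matrix.inv_eq_right_inv ?_
  rw [neg_mul_neg, hCC' γ C hC]

include hC in
lemma hgT (μ : Fin 4) : (γ μ)ᵀ = -(C⁻¹ * γ μ * C) := by rw [hC.2.2 μ, neg_neg]

include hcl hC in
lemma g5T : (gamma5 γ)ᵀ = C⁻¹ * gamma5 γ * C := by
  have hrev := grev γ hcl
  have s10 := gswap γ hcl (show (1:Fin 4) ≠ 0 by decide)
  have s20 := gswap γ hcl (show (2:Fin 4) ≠ 0 by decide)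
  have s21 := gswap γ hcl (show (2:Fin 4) ≠ 1 by decide)
  have s30 := gswap γ hcl (show (3:Fin 4) ≠ 0 by decide)
  have s31 := gswap γ hcl (show (3:Fin 4) ≠ 1 by decide)
  have s32 := gswap γ hcl (show (3:Fin 4) ≠ 2 by decide)
  simp only [gamma5, transpose_neg, transpose_mul, hgT γ C hC, mul_neg, neg_mul, neg_neg,
    mul_assoc, hmid γ C hC, neg_inj, s10, s20, s21, s30, s31, s32]

include hC in
lemma sigT (μ ν : Fin 4) : (sigmaMat γ μ ν)ᵀ = -(C⁻¹ * sigmaMat γ μ ν * C) := by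
  simp only [sigmaMat, transpose_smul, transpose_sub, transpose_mul, hgT γ C hC,
    mul_neg, neg_mul, neg_neg, mul_assoc, hmid γ C hC, smul_mul_assoc, mul_smul_comm,
    sub_mul, mul_sub]
  module

/-! ### The six transpose identities for `C⁻¹ * M` -/

include hC in
lemma T_one : (C⁻¹ * 1)ᵀ = (-1 : ℂ) • (C⁻¹ * 1) := by
  simp [hCiT γ C hC]

include hC in
lemma T_g (μ : Fin 4) : (C⁻¹ * γ μ)ᵀ = (1 : ℂ) • (C⁻¹ * γ μ) := by
  rw [transpose_mul, hCiT γ C hC, hgT γ C hC, neg_mul_neg, one_smul, mul_assoc, mul_assoc,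
    hCC' γ C hC, mul_one]

include hC in
lemma T_sig (μ ν : Fin 4) : (C⁻¹ * sigmaMat γ μ ν)ᵀ = (1 : ℂ) • (C⁻¹ * sigmaMat γ μ ν) := by
  rw [transpose_mul, hCiT γ C hC, sigT γ C hC, neg_mul_neg, one_smul, mul_assoc, mul_assoc,
    hCC' γ C hC, mul_one]

include hcl hC in
lemma T_g5 : (C⁻¹ * gamma5 γ)ᵀ = (-1 : ℂ) • (C⁻¹ * gamma5 γ) := by
  rw [transpose_mul, hCiT γ C hC, g5T γ C hcl hC, mul_neg, mul_assoc, mul_assoc,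
    hCC' γ C hC, mul_one, neg_smul, one_smul]

include hcl hC in
lemma T_g5g (μ : Fin 4) :
    (C⁻¹ * (gamma5 γ * γ μ))ᵀ = (-1 : ℂ) • (C⁻¹ * (gamma5 γ * γ μ)) := by
  rw [transpose_mul, hCiT γ C hC, transpose_mul, hgT γ C hC, g5T γ C hcl hC]
  simp only [mul_assoc, hmid γ C hC, mul_neg, neg_mul, neg_neg, neg_smul, one_smul]
  rw [hCC' γ C hC, mul_one, g5ac γ hcl μ, mul_neg]

include hcl hC in
lemma T_g5sig (μ ν : Fin 4) :
    (C⁻¹ * (gamma5 γ * sigmaMat γ μ ν))ᵀ =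
      (1 : ℂ) • (C⁻¹ * (gamma5 γ * sigmaMat γ μ ν)) := by
  rw [transpose_mul, hCiT γ C hC, transpose_mul, sigT γ C hC, g5T γ C hcl hC]
  simp only [mul_assoc, hmid γ C hC, mul_neg, neg_mul, neg_neg, one_smul]
  rw [hCC' γ C hC, mul_one, sg5 γ hcl μ ν]

end MatId

theorem statement11 {R : Type*} [Ring R] [Algebra ℂ R] {ι : Type*} [Fintype ι]
    (γ : Fin 4 → M4) (C : M4) (hcl : CliffordRel γ) (hC : ChargeConj γ C)
    (ψ : ι → Fin 4 → R)
    (hodd : ∀ a b α β, ψ a α * ψ b β = -(ψ b β * ψ a α)) :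
    (∀ S : ι → ι → ℂ, (∀ a b, S a b = S b a) →
      (∀ μ, ∑ a, ∑ b, S a b • bilin C (γ μ) (ψ a) (ψ b) = 0) ∧
      (∀ μ ν, ∑ a, ∑ b, S a b • bilin C (sigmaMat γ μ ν) (ψ a) (ψ b) = 0) ∧
      (∀ μ ν, ∑ a, ∑ b, S a b • bilin C (gamma5 γ * sigmaMat γ μ ν) (ψ a) (ψ b) = 0)) ∧
    (∀ A : ι → ι → ℂ, (∀ a b, A a b = -A b a) →
      (∑ a, ∑ b, A a b • bilin C 1 (ψ a) (ψ b) = 0) ∧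
      (∑ a, ∑ b, A a b • bilin C (gamma5 γ) (ψ a) (ψ b) = 0) ∧
      (∀ μ, ∑ a, ∑ b, A a b • bilin C (gamma5 γ * γ μ) (ψ a) (ψ b) = 0)) := by
  have mainS : ∀ (M : M4), (C⁻¹ * M)ᵀ = (1 : ℂ) • (C⁻¹ * M) →
      ∀ S : ι → ι → ℂ, (∀ a b, S a b = S b a) →
      ∑ a, ∑ b, S a b • bilin C M (ψ a) (ψ b) = 0 := by
    intro M hM S hS
    apply sum_skew'
    intro a b
    rw [bilin_swap' C M 1 hM (ψ a) (ψ b) (fun α β => hodd a b α β), one_smul,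
      smul_neg, neg_neg, hS a b]
  have mainA : ∀ (M : M4), (C⁻¹ * M)ᵀ = (-1 : ℂ) • (C⁻¹ * M) →
      ∀ A : ι → ι → ℂ, (∀ a b, A a b = -A b a) →
      ∑ a, ∑ b, A a b • bilin C M (ψ a) (ψ b) = 0 := by
    intro M hM A hA
    apply sum_skew'
    intro a b
    rw [bilin_swap' C M (-1) hM (ψ a) (ψ b) (fun α β => hodd a b α β), hA a b]
    simp
  refine ⟨fun S hS => ⟨fun μ => mainS _ (T_g γ C hC μ) S hS,
    fun μ ν => mainS _ (T_sig γ C hC μ ν) S hS,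
    fun μ ν => mainS _ (T_g5sig γ C hcl hC μ ν) S hS⟩,
    fun A hA => ⟨mainA _ (T_one γ C hC) A hA,
    mainA _ (T_g5 γ C hcl hC) A hA,
    fun μ => mainA _ (T_g5g γ C hcl hC μ) A hA⟩⟩
end
end

section
/- Let γ be Euclidean gamma matrices with charge-conjugation matrix C, and let ξ : Fin 4 → R be a Grassmann-even Majorana spinor over a ℂ-algebra R. Then the outer product ξ ξ̄ has the expansion: for all spinor indices α, β, ξ_α·ξ̄_β = (1/4)·Σ_μ (ξ̄γ_μξ)·(γ_μ)_{αβ} - (1/4)·Σ_{μ<ν} (ξ̄σ_{μν}ξ)·(σ_{μν})_{αβ}. -/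
/-!
The sixteen ordered products `γ_A` of distinct gamma matrices and their reversals `γ^A` are dual
under the trace form, `tr (γ^A γ_B) = 4 δ_AB`: for `A ≠ B` the product `γ^A γ_B` anticommutes
with some `γ_k`, so its trace vanishes. Hence they span all `4 × 4` matrices, which gives the
completeness relation `Σ_A (γ_A)_{αβ} (γ^A)_{δγ} = 4 δ_{αγ} δ_{βδ}`, i.e.
`4 ξ_α ξ̄_β = Σ_A (γ_A)_{αβ} ξ̄γ^Aξ`. For a Grassmann-even spinor, `ξ̄Mξ` vanishes whenever `C⁻¹M`
is antisymmetric; since `(C⁻¹γ^A)ᵀ = -(-1)^{k(k+1)/2} C⁻¹γ^A` for a product of `k` gammas, this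
kills the terms with `k = 0, 3, 4`. The surviving vector and tensor terms give the expansion,
the sign coming from `γ^{μν} = γ_ν γ_μ = -σ_{μν}`.
-/

open Matrix Complex BigOperators

noncomputable section

section CliffordGenerators

variable {A ι : Type*} {γ : ι → A}

theorem mul_prod_map_of_anticomm [Ring A] [DecidableEq ι]
    (hanti : ∀ i j, i ≠ j → γ i * γ j = -(γ j * γ i)) (k : ι) (l : List ι) :
    γ k * (l.map γ).prod = (-1 : ℤ) ^ l.countP (· ≠ k) • ((l.map γ).prod * γ k) := by
  induction l with
  | nil => simp
  | cons a l ih =>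
    rw [List.map_cons, List.prod_cons, List.countP_cons, ← mul_assoc]
    by_cases hak : a = k
    · subst hak
      conv_lhs => rw [mul_assoc, ih, mul_smul_comm, ← mul_assoc]
      simp
    · rw [hanti k a (Ne.symm hak), neg_mul, mul_assoc, ih, mul_smul_comm]
      simp [hak, pow_succ, mul_assoc]

theorem prod_map_reverse_mul_prod_map [Monoid A] (hsq : ∀ i, γ i * γ i = 1) (l : List ι) :
    (l.reverse.map γ).prod * (l.map γ).prod = 1 := by
  induction l with
  | nil => simp
  | cons a l ih =>
    simp only [List.reverse_cons, List.map_append, List.prod_append, List.map_cons,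
      List.prod_cons, List.map_nil, List.prod_nil, mul_one]
    rw [mul_assoc, ← mul_assoc (γ a), hsq, one_mul, ih]

theorem prod_map_reverse_of_nodup [Ring A] [DecidableEq ι]
    (hanti : ∀ i j, i ≠ j → γ i * γ j = -(γ j * γ i)) {l : List ι} (hl : l.Nodup) :
    (l.reverse.map γ).prod = (-1 : ℤ) ^ l.length.choose 2 • (l.map γ).prod := by
  induction l with
  | nil => simp
  | cons a l ih =>
    obtain ⟨ha, hl⟩ := List.nodup_cons.mp hl
    have hcount : l.countP (· ≠ a) = l.length :=
      List.countP_eq_length.mpr fun b hb => by simpa using ne_of_mem_of_not_mem hb ha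
    have hswap : (l.map γ).prod * γ a = (-1 : ℤ) ^ l.length • (γ a * (l.map γ).prod) := by
      rw [mul_prod_map_of_anticomm hanti, hcount, smul_smul, ← pow_add, ← two_mul,
        pow_mul]
      simp
    simp only [List.reverse_cons, List.map_append, List.prod_append, List.map_cons,
      List.prod_cons, List.map_nil, List.prod_nil, mul_one, List.length_cons,
      Nat.choose_succ_succ', Nat.choose_one_right]
    rw [ih hl, smul_mul_assoc, hswap, smul_smul, ← pow_add, add_comm]

end CliffordGenerators

namespace Matrix

theorem trace_eq_zero_of_anticomm {K n : Type*} [Field K] [CharZero K] [Fintype n]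
    [DecidableEq n] {g P : Matrix n n K} (hg : g * g = 1) (h : g * P = -(P * g)) :
    P.trace = 0 := by
  have : P.trace = -P.trace := calc
    P.trace = (g * (g * P)).trace := by rw [← mul_assoc, hg, one_mul]
    _ = -(g * (P * g)).trace := by rw [h, Matrix.mul_neg, trace_neg]
    _ = -P.trace := by rw [trace_mul_comm, mul_assoc, hg, mul_one]
  exact CharZero.eq_neg_self_iff.mp this

variable {K n ι : Type*} [Field K] [Fintype n] [Fintype ι] [DecidableEq ι]
  {B D : ι → Matrix n n K} {c : K}

theorem linearIndependent_of_trace_dual (hc : c ≠ 0)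
    (hdual : ∀ i j, (D i * B j).trace = if i = j then c else 0) : LinearIndependent K B := by
  rw [Fintype.linearIndependent_iff]
  intro a ha i
  have h := congrArg (fun X => (D i * X).trace) ha
  simp only [Matrix.mul_sum, Matrix.mul_smul, trace_sum, trace_smul, hdual, smul_eq_mul,
    mul_ite, mul_zero, Finset.sum_ite_eq, Finset.mem_univ, if_true,
    trace_zero] at h
  exact (mul_eq_zero.mp h).resolve_right hc

theorem sum_trace_mul_smul_of_trace_dual (hc : c ≠ 0)
    (hdual : ∀ i j, (D i * B j).trace = if i = j then c else 0)
    (hcard : Fintype.card ι = Fintype.card n ^ 2) (M : Matrix n n K) :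
    ∑ i, (D i * M).trace • B i = c • M := by
  let b := basisOfLinearIndependentOfCardEqFinrank' B
    (linearIndependent_of_trace_dual hc hdual) (by simp [Module.finrank_matrix, hcard, sq])
  have hb : ∀ i, b i = B i := fun i => by simp [b]
  conv_rhs => rw [← b.sum_repr M, Finset.smul_sum]
  refine Finset.sum_congr rfl fun i _ => ?_
  conv_lhs => rw [← b.sum_repr M]
  simp [hb, Matrix.mul_sum, trace_sum, hdual, smul_smul, mul_comm]

theorem sum_smul_sum_of_trace_dual [DecidableEq n] {V : Type*} [AddCommGroup V] [Module K V]
    (hc : c ≠ 0)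
    (hdual : ∀ i j, (D i * B j).trace = if i = j then c else 0)
    (hcard : Fintype.card ι = Fintype.card n ^ 2) (X : n → n → V) (a b : n) :
    ∑ i, B i a b • ∑ p, ∑ q, D i q p • X p q = c • X a b := by
  have hentry : ∀ p q, ∑ i, B i a b * D i q p = if p = a ∧ q = b then c else 0 := by
    intro p q
    have h := congrFun (congrFun
      (sum_trace_mul_smul_of_trace_dual hc hdual hcard (Matrix.single p q 1)) a) b
    simp only [Matrix.sum_apply, Matrix.smul_apply, smul_eq_mul, trace_mul_single] at h
    simpa [mul_comm, Matrix.single_apply, eq_comm, and_comm] using h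
  calc ∑ i, B i a b • ∑ p, ∑ q, D i q p • X p q
      = ∑ p, ∑ q, (∑ i, B i a b * D i q p) • X p q := by
        simp only [Finset.smul_sum, Finset.sum_smul, smul_smul]
        exact Finset.sum_comm.trans (Finset.sum_congr rfl fun p _ => Finset.sum_comm)
    _ = c • X a b := by simp [hentry, ite_smul, ite_and, Finset.sum_ite_eq']

end Matrix

def cliffordIndex : Fin 16 → List (Fin 4) :=
  ![[], [0], [1], [2], [3], [0, 1], [0, 2], [0, 3], [1, 2], [1, 3], [2, 3],
    [0, 1, 2], [0, 1, 3], [0, 2, 3], [1, 2, 3], [0, 1, 2, 3]]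

theorem cliffordIndex_exists_odd : ∀ i j : Fin 16, i ≠ j → ∃ k : Fin 4,
    Odd (((cliffordIndex i).reverse ++ cliffordIndex j).countP (· ≠ k)) := by
  decide

theorem cliffordIndex_nodup : ∀ i, (cliffordIndex i).Nodup := by
  decide

def cliffordBasis {A : Type*} [Monoid A] (γ : Fin 4 → A) (i : Fin 16) : A :=
  ((cliffordIndex i).map γ).prod

def cliffordDual {A : Type*} [Monoid A] (γ : Fin 4 → A) (i : Fin 16) : A :=
  ((cliffordIndex i).reverse.map γ).prod

namespace CliffordRel

variable {γ : Fin 4 → M4}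

theorem mul_self (hcl : CliffordRel γ) (μ : Fin 4) : γ μ * γ μ = 1 := by
  have h := hcl μ μ
  rw [if_pos rfl, ← two_smul ℂ] at h
  exact smul_right_injective M4 two_ne_zero h

theorem anticomm (hcl : CliffordRel γ) {μ ν : Fin 4} (h : μ ≠ ν) :
    γ μ * γ ν = -(γ ν * γ μ) := by
  have h' := hcl μ ν
  rw [if_neg h] at h'
  exact eq_neg_of_add_eq_zero_left h'

theorem sigmaMat_eq_mul (hcl : CliffordRel γ) {μ ν : Fin 4} (h : μ ≠ ν) :
    sigmaMat γ μ ν = γ μ * γ ν := by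
  rw [sigmaMat, hcl.anticomm h.symm, sub_neg_eq_add, ← two_smul ℂ, smul_smul]
  norm_num

theorem cliffordDual_eq (hcl : CliffordRel γ) (i : Fin 16) :
    cliffordDual γ i = (-1 : ℤ) ^ (cliffordIndex i).length.choose 2 • cliffordBasis γ i :=
  prod_map_reverse_of_nodup (fun _ _ => hcl.anticomm) (cliffordIndex_nodup i)

theorem trace_cliffordDual_mul_cliffordBasis (hcl : CliffordRel γ) (i j : Fin 16) :
    (cliffordDual γ i * cliffordBasis γ j).trace = if i = j then 4 else 0 := by
  split_ifs with h
  · subst h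
    rw [cliffordDual, cliffordBasis, prod_map_reverse_mul_prod_map hcl.mul_self]
    simp
  · obtain ⟨k, hk⟩ := cliffordIndex_exists_odd i j h
    rw [cliffordDual, cliffordBasis, ← List.prod_append, ← List.map_append]
    apply trace_eq_zero_of_anticomm (hcl.mul_self k)
    rw [mul_prod_map_of_anticomm (fun _ _ => hcl.anticomm), hk.neg_one_pow, neg_one_smul]

theorem sum_cliffordBasis_smul_sum {V : Type*} [AddCommGroup V] [Module ℂ V]
    (hcl : CliffordRel γ) (X : Fin 4 → Fin 4 → V) (a b : Fin 4) :
    ∑ i, cliffordBasis γ i a b • ∑ p, ∑ q, cliffordDual γ i q p • X p q = (4 : ℂ) • X a b :=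
  sum_smul_sum_of_trace_dual (by norm_num) hcl.trace_cliffordDual_mul_cliffordBasis (by simp) X a b

end CliffordRel

namespace ChargeConj

variable {γ : Fin 4 → M4} {C : M4}

theorem transpose_inv (hC : ChargeConj γ C) : C⁻¹ᵀ = -C⁻¹ := by
  rw [transpose_nonsing_inv, hC.2.1]
  exact inv_eq_right_inv (by rw [Matrix.neg_mul, Matrix.mul_neg, neg_neg, mul_nonsing_inv C hC.1])

theorem transpose_prod_map (hC : ChargeConj γ C) (l : List (Fin 4)) :
    ((l.map γ).prod)ᵀ = (-1 : ℤ) ^ l.length • (C⁻¹ * (l.reverse.map γ).prod * C) := by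
  induction l with
  | nil => simp [nonsing_inv_mul C hC.1]
  | cons a l ih =>
    have hγ : (γ a)ᵀ = -(C⁻¹ * γ a * C) := by rw [hC.2.2 a, neg_neg]
    simp only [List.map_cons, List.prod_cons, transpose_mul, ih, hγ, List.reverse_cons,
      List.map_append, List.prod_append, List.map_nil, List.prod_nil, mul_one,
      List.length_cons, pow_succ, mul_neg_one, neg_smul, smul_mul_assoc, Matrix.mul_neg, smul_neg]
    simp only [mul_assoc, mul_nonsing_inv_cancel_left C _ hC.1]

theorem transpose_inv_mul_prod_map_reverse (hC : ChargeConj γ C) (hcl : CliffordRel γ)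
    {l : List (Fin 4)} (hl : l.Nodup) (hk : Even ((l.length + 1).choose 2)) :
    (C⁻¹ * (l.reverse.map γ).prod)ᵀ = -(C⁻¹ * (l.reverse.map γ).prod) := by
  have hrev := prod_map_reverse_of_nodup (fun _ _ => hcl.anticomm) hl
  have hprod : (l.map γ).prod = (-1 : ℤ) ^ l.length.choose 2 • (l.reverse.map γ).prod := by
    rw [hrev, smul_smul, ← pow_add, ← two_mul, pow_mul]
    simp
  rw [Nat.choose_succ_succ', Nat.choose_one_right] at hk
  rw [transpose_mul, hC.transpose_inv, transpose_prod_map hC, List.reverse_reverse,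
    List.length_reverse, hprod]
  simp only [Matrix.mul_neg, smul_mul_assoc, mul_smul_comm, smul_smul, ← pow_add, hk.neg_one_pow,
    one_smul, mul_assoc, mul_nonsing_inv _ hC.1, mul_one]

end ChargeConj

section Majorana

variable {R : Type*} [Ring R] [Algebra ℂ R]

theorem sum_smul_mul_self_eq_zero {n : Type*} [Fintype n] {A : Matrix n n ℂ} (hA : Aᵀ = -A)
    {ξ : n → R} (heven : ∀ a b, ξ a * ξ b = ξ b * ξ a) :
    ∑ a, ∑ b, A a b • (ξ a * ξ b) = 0 := by
  have hA' : ∀ a b, A b a = -A a b := fun a b => by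
    simpa using congrFun (congrFun hA a) b
  set S := ∑ a, ∑ b, A a b • (ξ a * ξ b)
  have hS : S = -S := calc
    S = ∑ a, ∑ b, A b a • (ξ b * ξ a) := Finset.sum_comm
    _ = -S := by
      simp only [S, ← Finset.sum_neg_distrib]
      refine Finset.sum_congr rfl fun a _ => Finset.sum_congr rfl fun b _ => ?_
      rw [hA', heven, neg_smul]
  have h2 : (2 : ℂ) • S = 0 := by rw [two_smul]; nth_rewrite 2 [hS]; exact add_neg_cancel S
  exact (smul_eq_zero.mp h2).resolve_left two_ne_zero

variable (C : M4)

theorem bilin_eq_neg_sum (M : M4) (ξ χ : Fin 4 → R) :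
    bilin C M ξ χ = -∑ a, ∑ b, (C⁻¹ * M) a b • (ξ a * χ b) := by
  simp only [bilin, MajBar, mul_apply, neg_mul, Finset.sum_mul, Finset.sum_smul, smul_neg,
    Finset.sum_neg_distrib, smul_mul_assoc, smul_smul, Finset.smul_sum]
  rw [Finset.sum_comm_cycle]
  refine congrArg Neg.neg (Finset.sum_congr rfl fun a _ => ?_)
  rw [Finset.sum_comm]
  simp only [mul_comm]

theorem bilin_neg (M : M4) (ξ χ : Fin 4 → R) : bilin C (-M) ξ χ = -bilin C M ξ χ := by
  simp [bilin]

theorem majBar_mul_comm {ξ : Fin 4 → R} (heven : ∀ a b, ξ a * ξ b = ξ b * ξ a) (a b : Fin 4) :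
    MajBar C ξ a * ξ b = ξ b * MajBar C ξ a := by
  simp [MajBar, Finset.sum_mul, Finset.mul_sum, heven]

theorem bilin_self_eq_zero {M : M4} (hM : (C⁻¹ * M)ᵀ = -(C⁻¹ * M)) {ξ : Fin 4 → R}
    (heven : ∀ a b, ξ a * ξ b = ξ b * ξ a) : bilin C M ξ ξ = 0 := by
  rw [bilin_eq_neg_sum, sum_smul_mul_self_eq_zero hM heven, neg_zero]

theorem smul_mul_majBar_eq_sum {γ : Fin 4 → M4} (hcl : CliffordRel γ) {ξ : Fin 4 → R}
    (heven : ∀ a b, ξ a * ξ b = ξ b * ξ a) (α β : Fin 4) :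
    (4 : ℂ) • (ξ α * MajBar C ξ β) =
      ∑ i, cliffordBasis γ i α β • bilin C (cliffordDual γ i) ξ ξ := by
  rw [← hcl.sum_cliffordBasis_smul_sum (fun p q => ξ p * MajBar C ξ q)]
  refine Finset.sum_congr rfl fun i _ => ?_
  rw [bilin, Finset.sum_comm]
  simp only [majBar_mul_comm C heven]

theorem sum_cliffordBasis_smul_bilin {γ : Fin 4 → M4} (hcl : CliffordRel γ) (hC : ChargeConj γ C)
    {ξ : Fin 4 → R} (heven : ∀ a b, ξ a * ξ b = ξ b * ξ a) (α β : Fin 4) :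
    ∑ i, cliffordBasis γ i α β • bilin C (cliffordDual γ i) ξ ξ =
      ∑ μ, γ μ α β • bilin C (γ μ) ξ ξ - ∑ μ, ∑ ν,
        (if μ < ν then sigmaMat γ μ ν α β • bilin C (sigmaMat γ μ ν) ξ ξ else 0) := by
  have hvanish : ∀ i, cliffordBasis γ i α β • bilin C (cliffordDual γ i) ξ ξ =
      if Even (((cliffordIndex i).length + 1).choose 2) then 0
      else cliffordBasis γ i α β • bilin C (cliffordDual γ i) ξ ξ := fun i => by
    split_ifs with h
    · rw [bilin_self_eq_zero C (M := cliffordDual γ i)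
        (hC.transpose_inv_mul_prod_map_reverse hcl (cliffordIndex_nodup i) h) heven, smul_zero]
    · rfl
  rw [Finset.sum_congr rfl fun i _ => hvanish i]
  simp +decide [Fin.sum_univ_succ, hcl.cliffordDual_eq, cliffordBasis, cliffordIndex,
    hcl.sigmaMat_eq_mul, bilin_neg]
  abel

end Majorana

theorem statement17 {R : Type*} [Ring R] [Algebra ℂ R]
    (γ : Fin 4 → M4) (C : M4) (hcl : CliffordRel γ) (hC : ChargeConj γ C)
    (ξ : Fin 4 → R) (heven : ∀ α β, ξ α * ξ β = ξ β * ξ α) :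
    ∀ α β, ξ α * MajBar C ξ β =
      (4⁻¹ : ℂ) • ∑ μ, γ μ α β • bilin C (γ μ) ξ ξ
      - (4⁻¹ : ℂ) • ∑ μ, ∑ ν,
          (if μ < ν then sigmaMat γ μ ν α β • bilin C (sigmaMat γ μ ν) ξ ξ else 0) := by
  intro α β
  have hfierz := smul_mul_majBar_eq_sum C hcl heven α β
  rw [sum_cliffordBasis_smul_bilin C hcl hC heven] at hfierz
  rw [← smul_sub, ← hfierz, smul_smul]
  norm_num
end
end
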